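/- arXiv:2004.01080 — 4 statements merged into one kernel-verified Lean document; each statement's English description precedes it below -/
import Mathlib

section
/- The set A_3 = {π(3k) : k ∈ ℤ⁺} equals {m ∈ ℤ⁺ : m ≥ 2}, i.e., every integer m ≥ 2 is of the form π(3k) for some positive integer k. -/
/-!
Since `π 3 = 2` and `π` is monotone, every `π (3k)` with `k ≥ 1` is at least `2`. Conversely,
`3k + 3` is composite and one of `3k + 1`, `3k + 2` is an even number larger than `2`, so
`π (3(k + 1)) ≤ π (3k) + 1`: the sequence `π (3k)` tends to infinity in steps of at most one,
hence takes every value `≥ π 3 = 2`.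
-/

open Filter

theorem Nat.exists_eq_of_tendsto_of_le_add_one {f : ℕ → ℕ} (hf : Tendsto f atTop atTop)
    (hstep : ∀ n, f (n + 1) ≤ f n + 1) {m : ℕ} (hm : f 0 ≤ m) : ∃ n, f n = m := by
  classical
  have hreach : ∃ n, m ≤ f n := (hf.eventually_ge_atTop m).exists
  refine ⟨Nat.find hreach, le_antisymm ?_ (Nat.find_spec hreach)⟩
  rcases h : Nat.find hreach with _ | n
  · exact hm
  · have hlt : f n < m := not_le.mp (Nat.find_min hreach (by omega))
    exact (hstep n).trans hlt

namespace Nat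

theorem primeCounting_add_one (n : ℕ) :
    primeCounting (n + 1) = primeCounting n + if (n + 1).Prime then 1 else 0 :=
  count_succ _ _

theorem primeCounting_three : primeCounting 3 = 2 := by
  decide

theorem primeCounting_three_mul_add_one_le {k : ℕ} (hk : 0 < k) :
    primeCounting (3 * (k + 1)) ≤ primeCounting (3 * k) + 1 := by
  have hthird : ¬ (3 * (k + 1)).Prime := not_prime_mul (by norm_num) (by omega)
  have hfirst_or_second : ¬ (3 * k + 1).Prime ∨ ¬ (3 * k + 2).Prime := by
    rcases even_or_odd k with hk2 | hk2
    · refine .inr fun hp => ?_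
      have := hp.even_iff.mp (by simpa [parity_simps] using hk2)
      omega
    · refine .inl fun hp => ?_
      have := hp.even_iff.mp (by simpa [parity_simps] using hk2)
      omega
  rw [show 3 * (k + 1) = 3 * k + 1 + 1 + 1 by ring] at hthird ⊢
  rw [primeCounting_add_one, primeCounting_add_one, primeCounting_add_one]
  split_ifs <;> simp_all

end Nat

theorem stmt_1 :
    {m : ℕ | ∃ k : ℕ, 0 < k ∧ Nat.primeCounting (3 * k) = m} = {m : ℕ | 2 ≤ m} := by
  ext m
  constructor
  · rintro ⟨k, hk, rfl⟩
    exact Nat.primeCounting_three ▸ Nat.monotone_primeCounting (by omega)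
  · intro hm
    have hf : Tendsto (fun n => Nat.primeCounting (3 * (n + 1))) atTop atTop :=
      Nat.tendsto_primeCounting.comp
        (tendsto_atTop_mono (fun n => show n ≤ 3 * (n + 1) by omega) tendsto_id)
    obtain ⟨n, hn⟩ := Nat.exists_eq_of_tendsto_of_le_add_one hf
      (fun n => Nat.primeCounting_three_mul_add_one_le n.succ_pos)
      (by simpa [Nat.primeCounting_three] using hm)
    exact ⟨n + 1, n.succ_pos, hn⟩
end

section
/- For any positive integer n and integer K ≥ 3, with X = π(Kn), the number of positive integers a ≤ X not lying in A_n equals the sum over 1 ≤ k ≤ K with π(kn) − π(kn−n) ≥ 2 of (π(kn) − π(kn−n) − 1). -/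
open Finset

namespace Monotone

variable {g : ℕ → ℕ}

theorem notMem_range_of_lt_of_lt (hg : Monotone g) {k a : ℕ} (h₁ : g k < a)
    (h₂ : a < g (k + 1)) : a ∉ Set.range g := by
  rintro ⟨m, rfl⟩
  rcases le_or_gt m k with hm | hm
  · exact (hg hm).not_gt h₁
  · exact (hg hm).not_gt h₂

open Classical in
theorem filter_Ioc_notMem_range (hg : Monotone g) (k : ℕ) :
    {a ∈ Ioc (g k) (g (k + 1)) | a ∉ Set.range g} = Ioo (g k) (g (k + 1)) := by
  ext a
  simp only [mem_filter, mem_Ioc, mem_Ioo]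
  constructor
  · rintro ⟨⟨h₁, h₂⟩, hr⟩
    exact ⟨h₁, h₂.lt_of_ne fun h => hr ⟨k + 1, h.symm⟩⟩
  · rintro ⟨h₁, h₂⟩
    exact ⟨⟨h₁, h₂.le⟩, hg.notMem_range_of_lt_of_lt h₁ h₂⟩

open Classical in
theorem card_filter_Ioc_notMem_range (hg : Monotone g) (K : ℕ) :
    #{a ∈ Ioc (g 0) (g K) | a ∉ Set.range g} = ∑ k ∈ Icc 1 K, (g k - g (k - 1) - 1) := by
  induction K with
  | zero => simp
  | succ K ih =>
    have hsplit : Ioc (g 0) (g (K + 1)) = Ioc (g 0) (g K) ∪ Ioc (g K) (g (K + 1)) :=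
      (Ioc_union_Ioc_eq_Ioc (hg K.zero_le) (hg K.le_succ)).symm
    have hdisj : Disjoint (Ioc (g 0) (g K)) (Ioc (g K) (g (K + 1))) :=
      Ioc_disjoint_Ioc.mpr (min_le_left _ _ |>.trans (le_max_right _ _))
    rw [hsplit, filter_union, card_union_of_disjoint (disjoint_filter_filter hdisj), ih,
      hg.filter_Ioc_notMem_range, Nat.card_Ioo, sum_Icc_succ_top (by omega : 1 ≤ K + 1),
      Nat.add_sub_cancel]

end Monotone

open Classical in
theorem stmt_3_general (n K : ℕ) :
    ((Finset.Icc 1 (Nat.primeCounting (K * n))).filter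
        (fun a => a ∉ {m : ℕ | ∃ k : ℕ, 0 < k ∧ Nat.primeCounting (k * n) = m})).card =
      ∑ k ∈ (Finset.Icc 1 K).filter
          (fun k => 2 ≤ Nat.primeCounting (k * n) - Nat.primeCounting (k * n - n)),
        (Nat.primeCounting (k * n) - Nat.primeCounting (k * n - n) - 1) := by
  set g : ℕ → ℕ := fun k => Nat.primeCounting (k * n)
  have hg : Monotone g := fun _ _ h => Nat.monotone_primeCounting (Nat.mul_le_mul_right n h)
  have hg0 : g 0 = 0 := by simp [g]
  have hprev (k : ℕ) : Nat.primeCounting (k * n - n) = g (k - 1) := by simp only [g, Nat.sub_one_mul]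
  have hlhs : {a ∈ Icc 1 (g K) | a ∉ {m | ∃ k, 0 < k ∧ g k = m}} =
      {a ∈ Ioc (g 0) (g K) | a ∉ Set.range g} := by
    ext a
    simp only [mem_filter, mem_Icc, mem_Ioc, hg0, Set.mem_ofPred_eq, Set.mem_range]
    refine ⟨fun ⟨ha, hr⟩ => ⟨by omega, fun ⟨k, hk⟩ => hr ⟨k, ?_, hk⟩⟩,
      fun ⟨ha, hr⟩ => ⟨by omega, fun ⟨k, _, hk⟩ => hr ⟨k, hk⟩⟩⟩
    exact Nat.pos_of_ne_zero (by rintro rfl; omega)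
  rw [sum_filter_of_ne fun k _ h => by omega]
  simp only [hprev]
  rw [hlhs, hg.card_filter_Ioc_notMem_range]

open Classical in
theorem stmt_3 (n K : ℕ) (hn : 0 < n) (hK : 3 ≤ K) :
    ((Finset.Icc 1 (Nat.primeCounting (K * n))).filter
        (fun a => a ∉ {m : ℕ | ∃ k : ℕ, 0 < k ∧ Nat.primeCounting (k * n) = m})).card =
      ∑ k ∈ (Finset.Icc 1 K).filter
          (fun k => 2 ≤ Nat.primeCounting (k * n) - Nat.primeCounting (k * n - n)),
        (Nat.primeCounting (k * n) - Nat.primeCounting (k * n - n) - 1) :=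
  stmt_3_general n K
end

section
/- For any positive integer n and integer K ≥ 3, |A_n^c(X)| ≤ n·|K_set|, where X = π(Kn), A_n^c(X) is the set of positive integers a ≤ X not in A_n, and K_set = {1 ≤ k ≤ K : π(kn) − π(kn−n) ≥ 2}. -/
/-!
A value `a ≤ π(Kn)` missed by `k ↦ π(kn)` lies strictly between `π((k-1)n)` and `π(kn)` for
some `k ≤ K`, so this gap has size at least 2; and each gap holds at most `n` values, since an
interval of `n` consecutive integers contains at most `n` primes.
-/

open Finset

theorem Nat.primeCounting_add_le_primeCounting_add (m n : ℕ) :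
    Nat.primeCounting (m + n) ≤ Nat.primeCounting m + n := by
  rw [Nat.primeCounting, Nat.primeCounting', Nat.primeCounting, Nat.primeCounting',
    Nat.add_right_comm, Nat.count_add]
  exact Nat.add_le_add_left (Nat.count_le _) _

section Gaps

variable {g : ℕ → ℕ} {a K : ℕ}

-- The gap is the one ending at the least `k` with `a ≤ g k`.
theorem exists_mem_Ioo_of_notMem_image (h0 : g 0 = 0) (ha : a ∈ Icc 1 (g K))
    (hna : a ∉ g '' Set.Ioi 0) : ∃ k ∈ Icc 1 K, a ∈ Ioo (g (k - 1)) (g k) := by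
  rw [mem_Icc] at ha
  have hreach : ∃ k, a ≤ g k := ⟨K, ha.2⟩
  have hpos : 0 < Nat.find hreach := by
    by_contra! h
    have := Nat.find_spec hreach
    rw [Nat.le_zero.mp h, h0] at this
    omega
  refine ⟨Nat.find hreach, mem_Icc.mpr ⟨hpos, Nat.find_min' hreach ha.2⟩, mem_Ioo.mpr ⟨?_, ?_⟩⟩
  · exact not_le.mp (Nat.find_min hreach (Nat.sub_one_lt hpos.ne'))
  · exact (Nat.find_spec hreach).lt_of_ne fun h => hna ⟨_, hpos, h.symm⟩

open Classical in
theorem card_filter_notMem_image_le (h0 : g 0 = 0) {d : ℕ} (hd : ∀ k, g (k + 1) ≤ g k + d) :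
    ((Icc 1 (g K)).filter (· ∉ g '' Set.Ioi 0)).card ≤
      d * ((Icc 1 K).filter (fun k => 2 ≤ g k - g (k - 1))).card := by
  set gaps := (Icc 1 K).filter (fun k => 2 ≤ g k - g (k - 1))
  have hcover : (Icc 1 (g K)).filter (· ∉ g '' Set.Ioi 0) ⊆
      gaps.biUnion fun k => Ioo (g (k - 1)) (g k) := by
    intro a ha
    rw [mem_filter] at ha
    obtain ⟨k, hk, hak⟩ := exists_mem_Ioo_of_notMem_image h0 ha.1 ha.2
    rw [mem_Ioo] at hak
    exact mem_biUnion.mpr ⟨k, mem_filter.mpr ⟨hk, by omega⟩, mem_Ioo.mpr hak⟩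
  have hgap : ∀ k ∈ gaps, (Ioo (g (k - 1)) (g k)).card ≤ d := by
    intro k hk
    have := hd (k - 1)
    rw [Nat.sub_add_cancel (mem_Icc.mp (mem_filter.mp hk).1).1] at this
    rw [Nat.card_Ioo]
    omega
  calc _ ≤ (gaps.biUnion fun k => Ioo (g (k - 1)) (g k)).card := card_le_card hcover
    _ ≤ ∑ k ∈ gaps, (Ioo (g (k - 1)) (g k)).card := card_biUnion_le
    _ ≤ gaps.card • d := sum_le_card_nsmul _ _ _ hgap
    _ = d * gaps.card := by rw [smul_eq_mul, mul_comm]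

end Gaps

open Classical in
theorem stmt_4_general (n K : ℕ) :
    ((Finset.Icc 1 (Nat.primeCounting (K * n))).filter
        (fun a => a ∉ {m : ℕ | ∃ k : ℕ, 0 < k ∧ Nat.primeCounting (k * n) = m})).card ≤
      n * ((Finset.Icc 1 K).filter
          (fun k => 2 ≤ Nat.primeCounting (k * n) - Nat.primeCounting (k * n - n))).card := by
  have hstep : ∀ k, Nat.primeCounting ((k + 1) * n) ≤ Nat.primeCounting (k * n) + n := fun k => by
    rw [add_one_mul]
    exact Nat.primeCounting_add_le_primeCounting_add _ _
  have hprev : ∀ k, k * n - n = (k - 1) * n := fun k => (Nat.sub_one_mul k n).symm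
  simp_rw [hprev]
  exact card_filter_notMem_image_le (g := fun k => Nat.primeCounting (k * n)) (by simp) hstep

open Classical in
theorem stmt_4 (n K : ℕ) (hn : 0 < n) (hK : 3 ≤ K) :
    ((Finset.Icc 1 (Nat.primeCounting (K * n))).filter
        (fun a => a ∉ {m : ℕ | ∃ k : ℕ, 0 < k ∧ Nat.primeCounting (k * n) = m})).card ≤
      n * ((Finset.Icc 1 K).filter
          (fun k => 2 ≤ Nat.primeCounting (k * n) - Nat.primeCounting (k * n - n))).card :=
  stmt_4_general n K
end

section
/- The number of positive integers up to X that are products of at most two primes (with multiplicity) is ≫ (X / log X) · log log X for X large, and in particular (count)/(X/log X) → ∞ as X → ∞. -/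
/-!
For primes `p ≤ y < q` with `q ≤ X / p`, the products `p * q` are distinct P₂-numbers up to `X`.
With `y = ⌊X ^ (1/4)⌋`, Chebyshev's bound `π(x) ≥ x log 2 / log x - O(1)` shows that there are
at least about `(X log 2 / log X) ∑_{p ≤ y} 1/p` of them, and comparing the harmonic sum with the
Euler product, `log y ≤ ∑_{n ≤ y} 1/n ≤ ∏_{p ≤ y} (1 - 1/p)⁻¹ ≤ exp (2 ∑_{p ≤ y} 1/p)`, gives
`∑_{p ≤ y} 1/p ≥ ½ log log y`, which is `log log X` up to a constant.
-/

open Finset Filter Real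
open scoped Nat.Prime

lemma sum_Icc_inv_le_prod_primesLE (n : ℕ) :
    ∑ k ∈ Icc 1 n, (k : ℝ)⁻¹ ≤ ∏ p ∈ Nat.primesLE n, (1 - (p : ℝ)⁻¹)⁻¹ := by
  let f : ℕ →* ℝ :=
    (invMonoidWithZeroHom : ℝ →*₀ ℝ).toMonoidHom.comp (Nat.castRingHom ℝ).toMonoidHom
  have hf : ∀ {p : ℕ}, p.Prime → ‖f p‖ < 1 := fun {p} hp => by
    have : (1 : ℝ) < p := by exact_mod_cast hp.one_lt
    change ‖(p : ℝ)⁻¹‖ < 1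
    rwa [norm_inv, Real.norm_natCast, inv_lt_one₀ (by linarith)]
  have hsum := (EulerProduct.summable_and_hasSum_smoothNumbers_prod_primesBelow_geometric
    hf (n + 1)).2
  have hsmooth : ∀ k ∈ Icc 1 n, k ∈ (n + 1).smoothNumbers := fun k hk => by
    rw [mem_Icc] at hk
    exact Nat.mem_smoothNumbers_of_lt hk.1 (Nat.lt_succ_of_le hk.2)
  calc ∑ k ∈ Icc 1 n, (k : ℝ)⁻¹
      = ∑ k ∈ (Icc 1 n).subtype (· ∈ (n + 1).smoothNumbers), f k := by
        rw [sum_subtype_eq_sum_filter, filter_true_of_mem hsmooth]; rfl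
    _ ≤ ∏ p ∈ Nat.primesLE n, (1 - (p : ℝ)⁻¹)⁻¹ :=
        sum_le_hasSum _ (fun k _ => inv_nonneg.2 (Nat.cast_nonneg k.1)) hsum

lemma one_sub_inv_le_exp_two_mul {x : ℝ} (hx0 : 0 ≤ x) (hx : x ≤ 1 / 2) :
    (1 - x)⁻¹ ≤ exp (2 * x) := by
  calc (1 - x)⁻¹ ≤ 1 + 2 * x := by
        rw [inv_le_iff_one_le_mul₀ (by linarith)]; nlinarith
    _ ≤ exp (2 * x) := by linarith [add_one_le_exp (2 * x)]

lemma log_log_le_two_mul_sum_primesLE_inv (n : ℕ) :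
    log (log (n + 1)) ≤ 2 * ∑ p ∈ Nat.primesLE n, (p : ℝ)⁻¹ := by
  rcases n.eq_zero_or_pos with rfl | hn
  · simp
  have hlog : 0 < log (n + 1) := log_pos (by norm_cast; omega)
  have hprod : ∏ p ∈ Nat.primesLE n, (1 - (p : ℝ)⁻¹)⁻¹ ≤
      exp (2 * ∑ p ∈ Nat.primesLE n, (p : ℝ)⁻¹) := by
    rw [mul_sum, exp_sum]
    refine prod_le_prod (fun p hp => ?_) (fun p hp => ?_)
    all_goals
      have hp : (2 : ℝ) ≤ p := by exact_mod_cast Nat.two_le_of_mem_primesLE hp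
      have hinv : (p : ℝ)⁻¹ ≤ 1 / 2 := by rw [inv_le_comm₀] <;> linarith
    · exact inv_nonneg.2 (by linarith)
    · exact one_sub_inv_le_exp_two_mul (by positivity) hinv
  have hharm : log (n + 1) ≤ ∑ k ∈ Icc 1 n, (k : ℝ)⁻¹ := by
    simpa [harmonic_eq_sum_Icc] using log_add_one_le_harmonic n
  calc log (log (n + 1)) ≤ log (exp (2 * ∑ p ∈ Nat.primesLE n, (p : ℝ)⁻¹)) :=
        log_le_log hlog (hharm.trans ((sum_Icc_inv_le_prod_primesLE n).trans hprod))
    _ = _ := log_exp _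

lemma card_primesLE_le (n : ℕ) : #(Nat.primesLE n) ≤ n := by
  calc #(Nat.primesLE n) ≤ #(Icc 1 n) := card_le_card fun p hp => by
        rw [Nat.mem_primesLE] at hp
        exact mem_Icc.2 ⟨hp.2.one_le, hp.1⟩
    _ = n := Nat.card_Icc 1 n

lemma primeCounting_sub_le_card_filter_lt (M y : ℕ) :
    (π M : ℝ) - y ≤ #{q ∈ Nat.primesLE M | y < q} := by
  have hsmall : #{q ∈ Nat.primesLE M | ¬ y < q} ≤ y := by
    refine (card_le_card fun q hq => ?_).trans (card_primesLE_le y)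
    simp only [mem_filter, Nat.mem_primesLE, not_lt] at hq ⊢
    exact ⟨hq.2, hq.1.2⟩
  have hsplit := card_filter_add_card_filter_not (s := Nat.primesLE M) (p := fun q => y < q)
  rw [Nat.primesLE_card_eq_primeCounting] at hsplit
  rw [sub_le_iff_le_add]
  exact_mod_cast hsplit.symm.le.trans (Nat.add_le_add_left hsmall _)

lemma mul_log_two_div_log_sub_two_le_primeCounting {n x : ℕ} (hn : 2 ≤ n) (hnx : n ≤ x) :
    n * log 2 / log x - 2 ≤ π n := by
  have hlogn : 0 < log n := log_pos (by exact_mod_cast hn)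
  have hlogx : log n ≤ log x := log_le_log (by positivity) (by exact_mod_cast hnx)
  have hsucc : log (n + 1) ≤ 2 * log n := by
    rw [← log_rpow (by positivity)]
    exact log_le_log (by positivity) (by norm_cast; nlinarith)
  calc n * log 2 / log x - 2 ≤ n * log 2 / log n - log (n + 1) / log n := by
        gcongr
        rw [div_le_iff₀ hlogn]; exact hsucc
    _ = (n * log 2 - log (n + 1)) / log n := by ring
    _ ≤ π n := Chebyshev.pi_ge n

lemma div_mul_log_two_div_log_sub_three_le_primeCounting_div {X p : ℕ} (hp : 0 < p)
    (hpX : 2 * p ≤ X) :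
    X / p * log 2 / log X - 3 ≤ π (X / p) := by
  have hX : (1 : ℝ) < X := by exact_mod_cast (show 1 < X by omega)
  have hdiv : (X : ℝ) / p - 1 ≤ (X / p : ℕ) := by
    rw [sub_le_iff_le_add, div_le_iff₀ (by exact_mod_cast hp)]
    have : X ≤ (X / p + 1) * p := by rw [add_one_mul]; exact (Nat.lt_div_mul_add hp).le
    exact_mod_cast this
  have hlog2 : log 2 ≤ log X := log_le_log (by norm_num) (by exact_mod_cast (by omega : 2 ≤ X))
  calc X / p * log 2 / log X - 3 ≤ (X / p : ℕ) * log 2 / log X + log 2 / log X - 3 := by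
        rw [← add_div, ← add_one_mul]
        gcongr
        linarith
    _ ≤ (X / p : ℕ) * log 2 / log X - 2 := by
        have : log 2 / log X ≤ 1 := div_le_one_of_le₀ hlog2 (log_pos hX).le
        linarith
    _ ≤ π (X / p) := mul_log_two_div_log_sub_two_le_primeCounting
        ((Nat.le_div_iff_mul_le hp).2 (by linarith)) (Nat.div_le_self X p)

def countP2 (X : ℕ) : ℕ := #{a ∈ Icc 1 X | a.primeFactorsList.length ≤ 2}

lemma sum_card_primesLE_filter_lt_le_countP2 (X y : ℕ) :
    ∑ p ∈ Nat.primesLE y, #{q ∈ Nat.primesLE (X / p) | y < q} ≤ countP2 X := by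
  rw [countP2, ← card_sigma]
  refine card_le_card_of_injOn (fun pq => pq.1 * pq.2) ?_ ?_
  · rintro ⟨p, q⟩ h
    simp only [coe_sigma, Set.mem_sigma_iff, mem_coe, mem_filter, Nat.mem_primesLE] at h
    obtain ⟨⟨-, hp⟩, ⟨hqX, hq⟩, -⟩ := h
    simp only [coe_filter, Set.mem_ofPred_eq, mem_Icc]
    refine ⟨⟨Nat.mul_pos hp.pos hq.pos, ?_⟩, ?_⟩
    · rw [mul_comm]; exact (Nat.le_div_iff_mul_le hp.pos).1 hqX
    · rw [← ArithmeticFunction.cardFactors_apply, (Nat.Prime.mul_isAlmostPrime_two hp hq).2]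
  · rintro ⟨p, q⟩ h ⟨p', q'⟩ h' heq
    simp only [coe_sigma, Set.mem_sigma_iff, mem_coe, mem_filter, Nat.mem_primesLE] at h h' heq
    obtain ⟨⟨hpy, hp⟩, ⟨-, hq⟩, -⟩ := h
    obtain ⟨⟨-, hp'⟩, ⟨-, hq'⟩, hyq'⟩ := h'
    -- `p ∣ p' * q'` and `p ≤ y < q'`, so `p = p'`
    have hpp : p = p' := by
      rcases (Nat.Prime.dvd_mul hp).1 (heq ▸ dvd_mul_right p q) with h | h
      · exact (Nat.prime_dvd_prime_iff_eq hp hp').1 h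
      · exact absurd ((Nat.prime_dvd_prime_iff_eq hp hq').1 h) (by omega)
    subst hpp
    rw [Nat.eq_of_mul_eq_mul_left hp.pos heq]

lemma mul_log_log_sub_sqrt_le_countP2 {X : ℕ} (hX : 16 ≤ X) :
    X * log 2 / log X * (log (log X / 4) / 2) - 4 * √X ≤ countP2 X := by
  set y := Nat.sqrt (Nat.sqrt X)
  have hy : 2 ≤ y := Nat.le_sqrt.2 (Nat.le_sqrt.2 hX)
  have hyX : y * y * (y * y) ≤ X :=
    (Nat.mul_le_mul (Nat.sqrt_le _) (Nat.sqrt_le _)).trans (Nat.sqrt_le X)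
  have hXy : X < (y + 1) ^ 4 := by
    have h1 := Nat.lt_succ_sqrt X
    have h2 : Nat.sqrt X + 1 ≤ (y + 1) * (y + 1) := Nat.lt_succ_sqrt (Nat.sqrt X)
    nlinarith
  have hlogX : 0 < log X := log_pos (by exact_mod_cast (by omega : 1 < X))
  set A := X * log 2 / log X
  have hA : 0 ≤ A := by positivity
  have hterm : ∀ p ∈ Nat.primesLE y,
      A * (p : ℝ)⁻¹ - (3 + y) ≤ #{q ∈ Nat.primesLE (X / p) | y < q} := by
    intro p hp
    obtain ⟨hpy, hp⟩ := Nat.mem_primesLE.1 hp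
    have hpX : 2 * p ≤ X := by nlinarith
    have h1 := div_mul_log_two_div_log_sub_three_le_primeCounting_div hp.pos hpX
    have h2 := primeCounting_sub_le_card_filter_lt (X / p) y
    have h3 : A * (p : ℝ)⁻¹ = X / p * log 2 / log X := by ring
    linarith
  have hsum := sum_le_sum hterm
  rw [sum_sub_distrib, ← mul_sum, sum_const, nsmul_eq_mul] at hsum
  have hcount : ∑ p ∈ Nat.primesLE y, (#{q ∈ Nat.primesLE (X / p) | y < q} : ℝ) ≤ countP2 X := by
    exact_mod_cast sum_card_primesLE_filter_lt_le_countP2 X y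
  have hrecip : log (log X / 4) / 2 ≤ ∑ p ∈ Nat.primesLE y, (p : ℝ)⁻¹ := by
    have hlog : log X / 4 ≤ log (y + 1) := by
      have : log X ≤ log (((y : ℝ) + 1) ^ 4) :=
        log_le_log (by positivity) (by exact_mod_cast hXy.le)
      rw [log_pow, Nat.cast_ofNat] at this
      linarith
    linarith [log_le_log (by positivity) hlog, log_log_le_two_mul_sum_primesLE_inv y]
  have herror : (#(Nat.primesLE y) : ℝ) * (3 + y) ≤ 4 * √X := by
    have hcard : (#(Nat.primesLE y) : ℝ) ≤ y := by exact_mod_cast card_primesLE_le y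
    have hy : (2 : ℝ) ≤ y := by exact_mod_cast hy
    have hsq : (y : ℝ) * y ≤ √X := Real.le_sqrt_of_sq_le (by rw [sq]; exact_mod_cast hyX)
    nlinarith
  linarith [mul_le_mul_of_nonneg_left hrecip hA]

lemma eventually_log_le_mul_sqrt {c : ℝ} (hc : 0 < c) : ∀ᶠ x : ℝ in atTop, log x ≤ c * √x := by
  filter_upwards [(isLittleO_log_rpow_atTop one_half_pos).bound hc, eventually_ge_atTop 0]
    with x hx hx0
  rw [sqrt_eq_rpow, ← abs_of_nonneg (rpow_nonneg hx0 _)]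
  exact (le_abs_self _).trans hx

lemma eventually_mul_log_log_le_countP2 :
    ∀ᶠ X : ℕ in atTop, log 2 / 4 * (X / log X * log (log X)) ≤ countP2 X := by
  have hlog : Tendsto (fun X : ℕ => log X) atTop atTop :=
    tendsto_log_atTop.comp tendsto_natCast_atTop_atTop
  have hlog2 : 0 < log 2 := log_pos one_lt_two
  filter_upwards [eventually_ge_atTop 16,
    (tendsto_log_atTop.comp hlog).eventually_ge_atTop (4 * log 4 + 1),
    tendsto_natCast_atTop_atTop.eventually (eventually_log_le_mul_sqrt (c := log 2 / 16)
      (by positivity))] with X hX hLL hL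
  refine le_trans ?_ (mul_log_log_sub_sqrt_le_countP2 hX)
  simp only [Function.comp_apply] at hLL
  have hX0 : (0 : ℝ) < X := by exact_mod_cast (by omega : 0 < X)
  have hL0 : 0 < log X := log_pos (by exact_mod_cast (by omega : 1 < X))
  rw [log_div hL0.ne' four_ne_zero]
  have hsqrt : 4 * √X ≤ log 2 / 4 * (X / log X) := by
    rw [show log 2 / 4 * (X / log X) = log 2 * X / 4 / log X by ring, le_div_iff₀ hL0]
    have := mul_le_mul_of_nonneg_left hL (by positivity : (0 : ℝ) ≤ 4 * √X)
    nlinarith [mul_self_sqrt hX0.le]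
  have hB : 0 ≤ log 2 * (X / log X) := by positivity
  have hlog4 : 0 ≤ log 4 := log_nonneg (by norm_num)
  have hLL' := mul_le_mul_of_nonneg_left hLL hB
  have hexpand : X * log 2 / log X * ((log (log X) - log 4) / 2) =
      log 2 * (X / log X) * log (log X) / 2 - log 2 * (X / log X) * log 4 / 2 := by ring
  linarith [mul_nonneg hB hlog4]

theorem stmt_12 :
    (∃ c : ℝ, 0 < c ∧ ∀ᶠ X : ℕ in Filter.atTop,
      c * ((X : ℝ) / Real.log X * Real.log (Real.log X)) ≤
        (((Finset.Icc 1 X).filter (fun a => a.primeFactorsList.length ≤ 2)).card : ℝ)) ∧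
    Filter.Tendsto
      (fun X : ℕ =>
        (((Finset.Icc 1 X).filter (fun a => a.primeFactorsList.length ≤ 2)).card : ℝ) /
          ((X : ℝ) / Real.log X))
      Filter.atTop Filter.atTop := by
  have hc : 0 < log 2 / 4 := by positivity
  have hcount := eventually_mul_log_log_le_countP2
  refine ⟨⟨log 2 / 4, hc, hcount⟩, ?_⟩
  have hlog : Tendsto (fun X : ℕ => log X) atTop atTop :=
    tendsto_log_atTop.comp tendsto_natCast_atTop_atTop
  refine tendsto_atTop_mono' atTop ?_ ((tendsto_log_atTop.comp hlog).const_mul_atTop hc)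
  filter_upwards [hcount, eventually_gt_atTop 1] with X hX hX1
  have hXL : (0 : ℝ) < X / log X :=
    div_pos (by exact_mod_cast (by omega : 0 < X)) (log_pos (by exact_mod_cast hX1))
  rw [le_div_iff₀ hXL, Function.comp_apply]
  exact (le_of_eq (by ring)).trans hX
end
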